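/- Let W ∈ ℝ^{N×N} be symmetric, nonnegative and doubly stochastic with associated connected graph, t ≥ 1 an integer, L_t := 1 − σ_N(W^t) with σ_N(W^t) the smallest eigenvalue of W^t. Let 𝐗 = (X_1,…,X_N) ∈ St(n,r)^N belong to the local region S (with constants δ₂ ≤ 1/6, δ₁ ≤ δ₂/(5√r)), let X̂ be its induced arithmetic mean, and set Φ := 2 − max_{i} ‖X_i − X̂‖_F² (so Φ ≥ 1). Then Σ_{i=1}^N ⟨X_i − X̂, grad_{X_i} h_t(𝐗)⟩ ≥ (Φ/(2L_t)) Σ_{i=1}^N ‖grad_{X_i} h_t(𝐗)‖_F². -/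

import Mathlib

open Matrix
open scoped BigOperators

noncomputable section

/-- the Frobenius norm of a real matrix -/
def frob {n r : ℕ} (A : Matrix (Fin n) (Fin r) ℝ) : ℝ :=
  Real.sqrt (∑ i, ∑ j, (A i j) ^ 2)

/-- the trace inner product ⟨A,B⟩ = tr(AᵀB) -/
def innerF {n r : ℕ} (A B : Matrix (Fin n) (Fin r) ℝ) : ℝ := (Aᵀ * B).trace

/-- the Stiefel manifold St(n,r) -/
def Stiefel (n r : ℕ) : Set (Matrix (Fin n) (Fin r) ℝ) := {X | Xᵀ * X = 1}

/-- orthogonal projection onto the tangent space at X -/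
def projT {n r : ℕ} (X Y : Matrix (Fin n) (Fin r) ℝ) : Matrix (Fin n) (Fin r) ℝ :=
  Y - (1 / 2 : ℝ) • (X * (Xᵀ * Y + Yᵀ * X))

/-- the induced arithmetic mean (IAM) on the Stiefel manifold -/
def IsIAM {n r N : ℕ} (Xs : Fin N → Matrix (Fin n) (Fin r) ℝ)
    (Xhat : Matrix (Fin n) (Fin r) ℝ) : Prop :=
  Xhat ∈ Stiefel n r ∧
    ∀ Y ∈ Stiefel n r, ∑ i, frob (Xhat - Xs i) ^ 2 ≤ ∑ i, frob (Y - Xs i) ^ 2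

/-- the smallest eigenvalue of a (symmetric) square matrix, via the Rayleigh quotient -/
def minEig {N : ℕ} (A : Matrix (Fin N) (Fin N) ℝ) : ℝ :=
  sInf {c | ∃ x : EuclideanSpace ℝ (Fin N), ‖x‖ = 1 ∧
    c = inner ℝ x (Matrix.toEuclideanLin A x)}

/-- the communication graph induced by the weight matrix W -/
def commGraph {N : ℕ} (W : Matrix (Fin N) (Fin N) ℝ) : SimpleGraph (Fin N) where
  Adj i j := i ≠ j ∧ (0 < W i j ∨ 0 < W j i)
  symm := ⟨fun i j h => ⟨h.1.symm, h.2.symm⟩⟩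
  loopless := ⟨fun i h => h.1 rfl⟩

/-- the Riemannian gradient of the local consensus potential
`h_{i,t}(𝐗) = (1/2)Σ_j (Wᵗ)_{ij}‖X_i − X_j‖_F²`,
namely `grad h_{i,t}(𝐗) = P_{T_{X_i}}(X_i − Σ_j (Wᵗ)_{ij} X_j)`. -/
def gradh {n r N : ℕ} (W : Matrix (Fin N) (Fin N) ℝ) (t : ℕ)
    (Xs : Fin N → Matrix (Fin n) (Fin r) ℝ) (i : Fin N) : Matrix (Fin n) (Fin r) ℝ :=
  projT (Xs i) (Xs i - ∑ j, (W ^ t) i j • Xs j)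

/-- membership in the local region 𝒮 = 𝒮₁ ∩ 𝒮₂ of Definition 12 -/
def inS {n r N : ℕ} (δ₁ δ₂ : ℝ) (Xs : Fin N → Matrix (Fin n) (Fin r) ℝ)
    (Xhat : Matrix (Fin n) (Fin r) ℝ) : Prop :=
  (∀ i, Xs i ∈ Stiefel n r) ∧ (∑ i, frob (Xs i - Xhat) ^ 2 ≤ N * δ₁ ^ 2) ∧
    (∀ i, frob (Xs i - Xhat) ≤ δ₂)

/-!
Write `G_i = X_i - ∑_j (Wᵗ)_{ij} X_j` for the Euclidean gradient and
`q = ∑_{i,j} (Wᵗ)_{ij} ‖X_i - X_j‖²` (`= 4 h_t`). Symmetrising over `i, j` gives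
`∑_i ⟨X_i - Z, G_i⟩ = q / 2` for every `Z`. The projection `P_{T_{X_i}}` is self-adjoint, and
for `X_i, X̂` on the Stiefel manifold
`P_{T_{X_i}}(X_i - X̂) = (X_i - X̂) - ½ X_i (X_i - X̂)ᵀ(X_i - X̂)`; the correction term against
`X_i - X_j` equals `½ ‖(X_i - X̂)(X_i - X_j)ᵀ‖²`, so the left-hand side is at least
`q / 2 - max_i ‖X_i - X̂‖² q / 4 = Φ q / 4`.
On the other side `‖grad_i‖ ≤ ‖G_i‖`, and `B = I - Wᵗ` satisfies `0 ≤ B ≤ L_t` as a quadratic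
form, hence `‖B x‖² ≤ L_t ⟨x, B x⟩`; applied entrywise this gives `∑_i ‖G_i‖² ≤ L_t q / 2`.
-/

section Frobenius

variable {n r : ℕ}

lemma innerF_eq_sum (A B : Matrix (Fin n) (Fin r) ℝ) :
    innerF A B = ∑ a, ∑ b, A a b * B a b := by
  simp only [innerF, trace, diag, mul_apply, transpose_apply]
  exact Finset.sum_comm

lemma innerF_comm (A B : Matrix (Fin n) (Fin r) ℝ) : innerF A B = innerF B A := by
  rw [innerF, innerF, ← trace_transpose, transpose_mul, transpose_transpose]

lemma innerF_sub_left (A B C : Matrix (Fin n) (Fin r) ℝ) :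
    innerF (A - B) C = innerF A C - innerF B C := by
  rw [innerF, innerF, innerF, transpose_sub, Matrix.sub_mul, trace_sub]

lemma innerF_sub_right (A B C : Matrix (Fin n) (Fin r) ℝ) :
    innerF A (B - C) = innerF A B - innerF A C := by
  rw [innerF, innerF, innerF, Matrix.mul_sub, trace_sub]

lemma innerF_add_right (A B C : Matrix (Fin n) (Fin r) ℝ) :
    innerF A (B + C) = innerF A B + innerF A C := by
  rw [innerF, innerF, innerF, Matrix.mul_add, trace_add]

lemma innerF_smul_left (c : ℝ) (A B : Matrix (Fin n) (Fin r) ℝ) :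
    innerF (c • A) B = c * innerF A B := by
  simp [innerF]

lemma innerF_smul_right (c : ℝ) (A B : Matrix (Fin n) (Fin r) ℝ) :
    innerF A (c • B) = c * innerF A B := by
  simp [innerF]

lemma innerF_sum_right {ι : Type*} (s : Finset ι) (A : Matrix (Fin n) (Fin r) ℝ)
    (B : ι → Matrix (Fin n) (Fin r) ℝ) :
    innerF A (∑ j ∈ s, B j) = ∑ j ∈ s, innerF A (B j) := by
  simp [innerF, Matrix.mul_sum, trace_sum]

lemma frob_nonneg (A : Matrix (Fin n) (Fin r) ℝ) : 0 ≤ frob A := Real.sqrt_nonneg _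

lemma frob_sq (A : Matrix (Fin n) (Fin r) ℝ) : frob A ^ 2 = innerF A A := by
  rw [frob, Real.sq_sqrt (by positivity), innerF_eq_sum]
  simp only [sq]

lemma innerF_sub_add_innerF_sub (U V Z : Matrix (Fin n) (Fin r) ℝ) :
    innerF (U - Z) (U - V) + innerF (V - Z) (V - U) = frob (U - V) ^ 2 := by
  simp only [frob_sq, innerF_sub_left, innerF_sub_right]
  ring

section

open scoped Matrix.Norms.Frobenius

lemma frob_eq_frobenius_norm (A : Matrix (Fin n) (Fin r) ℝ) : frob A = ‖A‖ := by
  rw [frob, frobenius_norm_def, Real.sqrt_eq_rpow]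
  simp

lemma frob_mul_le {m : ℕ} (A : Matrix (Fin n) (Fin m) ℝ) (B : Matrix (Fin m) (Fin r) ℝ) :
    frob (A * B) ≤ frob A * frob B := by
  simpa only [frob_eq_frobenius_norm] using frobenius_norm_mul A B

lemma frob_transpose (A : Matrix (Fin n) (Fin r) ℝ) : frob Aᵀ = frob A := by
  simpa only [frob_eq_frobenius_norm] using frobenius_norm_transpose A

end

lemma sum_innerF_eq_sum_dotProduct {ι : Type*} [Fintype ι] (F G : ι → Matrix (Fin n) (Fin r) ℝ) :
    ∑ i, innerF (F i) (G i) = ∑ a, ∑ b, (fun i => F i a b) ⬝ᵥ (fun i => G i a b) := by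
  simp only [innerF_eq_sum, dotProduct]
  rw [Finset.sum_comm]
  exact Finset.sum_congr rfl fun a _ => Finset.sum_comm

end Frobenius

section TangentProjection

variable {n r : ℕ}

lemma mem_stiefel {X : Matrix (Fin n) (Fin r) ℝ} : X ∈ Stiefel n r ↔ Xᵀ * X = 1 := Iff.rfl

lemma innerF_mul_right {m : ℕ} (U : Matrix (Fin n) (Fin r) ℝ) (X : Matrix (Fin n) (Fin m) ℝ)
    (S : Matrix (Fin m) (Fin r) ℝ) : innerF U (X * S) = innerF (Xᵀ * U) S := by
  rw [innerF, innerF, transpose_mul, transpose_transpose, Matrix.mul_assoc]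

lemma innerF_transpose_right (M N : Matrix (Fin r) (Fin r) ℝ) :
    innerF M Nᵀ = innerF N Mᵀ := by
  rw [innerF, innerF, ← transpose_mul, ← transpose_mul, trace_transpose, trace_transpose,
    trace_mul_comm]

lemma innerF_projT (X U V : Matrix (Fin n) (Fin r) ℝ) :
    innerF U (projT X V) =
      innerF U V - (1 / 2 : ℝ) * (innerF (Xᵀ * U) (Xᵀ * V) + innerF (Xᵀ * U) (Xᵀ * V)ᵀ) := by
  rw [projT, innerF_sub_right, innerF_smul_right, innerF_mul_right, innerF_add_right,
    transpose_mul Xᵀ V, transpose_transpose]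

lemma innerF_projT_comm (X Y Z : Matrix (Fin n) (Fin r) ℝ) :
    innerF Z (projT X Y) = innerF (projT X Z) Y := by
  rw [innerF_comm (projT X Z), innerF_projT, innerF_projT, innerF_comm Y Z,
    innerF_comm (Xᵀ * Y), innerF_transpose_right]

lemma projT_of_transpose_mul_add_eq_zero {X U : Matrix (Fin n) (Fin r) ℝ}
    (hU : Xᵀ * U + Uᵀ * X = 0) : projT X U = U := by
  rw [projT, hU, Matrix.mul_zero, smul_zero, sub_zero]

lemma transpose_mul_projT_add_eq_zero {X : Matrix (Fin n) (Fin r) ℝ} (hX : X ∈ Stiefel n r)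
    (Y : Matrix (Fin n) (Fin r) ℝ) : Xᵀ * projT X Y + (projT X Y)ᵀ * X = 0 := by
  have hS : (Xᵀ * Y + Yᵀ * X)ᵀ = Xᵀ * Y + Yᵀ * X := by
    rw [transpose_add, transpose_mul, transpose_mul, transpose_transpose, transpose_transpose,
      add_comm]
  rw [projT, transpose_sub, Matrix.mul_sub, Matrix.sub_mul, transpose_smul, Matrix.mul_smul,
    Matrix.smul_mul, ← Matrix.mul_assoc, mem_stiefel.1 hX, Matrix.one_mul, transpose_mul, hS,
    Matrix.mul_assoc, mem_stiefel.1 hX, Matrix.mul_one, sub_add_sub_comm, ← add_smul]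
  norm_num

lemma projT_projT {X : Matrix (Fin n) (Fin r) ℝ} (hX : X ∈ Stiefel n r)
    (Y : Matrix (Fin n) (Fin r) ℝ) : projT X (projT X Y) = projT X Y :=
  projT_of_transpose_mul_add_eq_zero (transpose_mul_projT_add_eq_zero hX Y)

lemma frob_projT_sq_le {X : Matrix (Fin n) (Fin r) ℝ} (hX : X ∈ Stiefel n r)
    (Y : Matrix (Fin n) (Fin r) ℝ) : frob (projT X Y) ^ 2 ≤ frob Y ^ 2 := by
  have hPY : innerF (projT X Y) (projT X Y) = innerF (projT X Y) Y := by
    rw [innerF_projT_comm, projT_projT hX]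
  have hpyth : frob (Y - projT X Y) ^ 2 = frob Y ^ 2 - frob (projT X Y) ^ 2 := by
    rw [frob_sq, frob_sq, frob_sq, innerF_sub_left, innerF_sub_right, innerF_sub_right,
      innerF_comm Y (projT X Y), hPY]
    ring
  nlinarith [sq_nonneg (frob (Y - projT X Y))]

lemma projT_sub_of_mem_stiefel {X Z : Matrix (Fin n) (Fin r) ℝ} (hX : X ∈ Stiefel n r)
    (hZ : Z ∈ Stiefel n r) :
    projT X (X - Z) = (X - Z) - (1 / 2 : ℝ) • (X * ((X - Z)ᵀ * (X - Z))) := by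
  rw [projT]
  congr 3
  simp only [transpose_sub, Matrix.sub_mul, Matrix.mul_sub, mem_stiefel.1 hX, mem_stiefel.1 hZ]
  abel

lemma innerF_mul_sub_of_mem_stiefel {X Y : Matrix (Fin n) (Fin r) ℝ} (hX : X ∈ Stiefel n r)
    (hY : Y ∈ Stiefel n r) {D : Matrix (Fin r) (Fin r) ℝ} (hD : D.IsSymm) :
    innerF (X * D) (X - Y) = (D * ((X - Y)ᵀ * (X - Y))).trace / 2 := by
  have hgram : (X - Y)ᵀ * (X - Y) = 1 - Xᵀ * Y + (1 - Yᵀ * X) := by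
    rw [transpose_sub, Matrix.sub_mul, Matrix.mul_sub, Matrix.mul_sub, mem_stiefel.1 hX,
      mem_stiefel.1 hY]
    abel
  have hswap : (D * (Yᵀ * X)).trace = (D * (Xᵀ * Y)).trace := by
    rw [← trace_transpose, transpose_mul, transpose_mul, transpose_transpose, hD.eq,
      trace_mul_comm]
  have hlhs : innerF (X * D) (X - Y) = (D * (1 - Xᵀ * Y)).trace := by
    rw [innerF, transpose_mul, hD.eq, Matrix.mul_assoc, Matrix.mul_sub, mem_stiefel.1 hX]
  rw [hlhs, hgram]
  simp only [Matrix.mul_add, Matrix.mul_sub, Matrix.mul_one, trace_add, trace_sub, hswap]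
  ring

lemma trace_gram_mul_gram_eq_frob_sq {m : ℕ} (E : Matrix (Fin m) (Fin r) ℝ)
    (F : Matrix (Fin n) (Fin r) ℝ) :
    ((Eᵀ * E) * (Fᵀ * F)).trace = frob (E * Fᵀ) ^ 2 := by
  rw [frob_sq, innerF, transpose_mul, transpose_transpose, ← Matrix.mul_assoc _ Fᵀ F,
    trace_mul_comm]
  simp only [Matrix.mul_assoc]

lemma innerF_mul_gram_sub_le {m : ℕ} {X Y : Matrix (Fin n) (Fin r) ℝ} (hX : X ∈ Stiefel n r)
    (hY : Y ∈ Stiefel n r) (E : Matrix (Fin m) (Fin r) ℝ) :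
    innerF (X * (Eᵀ * E)) (X - Y) ≤ frob E ^ 2 * frob (X - Y) ^ 2 / 2 := by
  have hgram : (Eᵀ * E).IsSymm := by rw [IsSymm, transpose_mul, transpose_transpose]
  rw [innerF_mul_sub_of_mem_stiefel hX hY hgram, trace_gram_mul_gram_eq_frob_sq]
  have h := frob_mul_le E (X - Y)ᵀ
  rw [frob_transpose] at h
  have h2 := pow_le_pow_left₀ (frob_nonneg _) h 2
  rw [mul_pow] at h2
  linarith

end TangentProjection

section QuadraticForms

variable {ι : Type*} [Fintype ι]

lemma norm_toLp_sq (x : ι → ℝ) : ‖(WithLp.toLp 2 x : EuclideanSpace ℝ ι)‖ ^ 2 = x ⬝ᵥ x := by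
  rw [← real_inner_self_eq_norm_sq, EuclideanSpace.inner_toLp_toLp, star_trivial]

lemma mulVec_dotProduct_mulVec_le_of_nonneg_of_le (B : Matrix ι ι ℝ) (hB : B.IsSymm) {c : ℝ}
    (hc : 0 < c) (h0 : ∀ x, 0 ≤ x ⬝ᵥ B *ᵥ x) (hle : ∀ x, x ⬝ᵥ B *ᵥ x ≤ c * (x ⬝ᵥ x))
    (x : ι → ℝ) : B *ᵥ x ⬝ᵥ B *ᵥ x ≤ c * (x ⬝ᵥ B *ᵥ x) := by
  have hxy : x ⬝ᵥ B *ᵥ (B *ᵥ x) = B *ᵥ x ⬝ᵥ B *ᵥ x := by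
    rw [dotProduct_mulVec, ← mulVec_transpose, hB.eq]
  -- positivity of `B` at `c • x - B x`, combined with `B ≤ c` at `B x`
  have hz := h0 (c • x - B *ᵥ x)
  simp only [mulVec_sub, mulVec_smul, sub_dotProduct, dotProduct_sub, smul_dotProduct,
    dotProduct_smul, smul_eq_mul, hxy] at hz
  nlinarith [hle (B *ᵥ x)]

lemma dotProduct_mulVec_le_dotProduct_self_of_mem_doublyStochastic [DecidableEq ι]
    {A : Matrix ι ι ℝ} (hA : A ∈ doublyStochastic ℝ ι) (x : ι → ℝ) : x ⬝ᵥ A *ᵥ x ≤ x ⬝ᵥ x := by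
  have hAx : ‖(WithLp.toLp 2 (A *ᵥ x) : EuclideanSpace ℝ ι)‖ ≤
      ‖(WithLp.toLp 2 x : EuclideanSpace ℝ ι)‖ :=
    (A.l2_opNorm_mulVec _).trans <|
      mul_le_of_le_one_left (norm_nonneg _) (l2_opNorm_le_one_of_mem_doublyStochastic hA)
  have hcs := real_inner_le_norm (WithLp.toLp 2 x : EuclideanSpace ℝ ι) (WithLp.toLp 2 (A *ᵥ x))
  rw [EuclideanSpace.inner_toLp_toLp, star_trivial, dotProduct_comm] at hcs
  nlinarith [norm_nonneg (WithLp.toLp 2 x : EuclideanSpace ℝ ι), norm_toLp_sq x]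

end QuadraticForms

lemma bddBelow_rayleigh {N : ℕ} (A : Matrix (Fin N) (Fin N) ℝ) :
    BddBelow {c | ∃ x : EuclideanSpace ℝ (Fin N), ‖x‖ = 1 ∧
      c = inner ℝ x (Matrix.toEuclideanLin A x)} := by
  have hT : Continuous (Matrix.toEuclideanLin A) := LinearMap.continuous_of_finiteDimensional _
  have hset : {c | ∃ x : EuclideanSpace ℝ (Fin N), ‖x‖ = 1 ∧
      c = inner ℝ x (Matrix.toEuclideanLin A x)} =
      (fun x => inner ℝ x (Matrix.toEuclideanLin A x)) '' Metric.sphere 0 1 := by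
    ext c; simp [eq_comm]
  rw [hset]
  exact (isCompact_sphere 0 1).bddBelow_image (continuous_id.inner hT).continuousOn

lemma minEig_mul_dotProduct_self_le {N : ℕ} (A : Matrix (Fin N) (Fin N) ℝ) (x : Fin N → ℝ) :
    minEig A * (x ⬝ᵥ x) ≤ x ⬝ᵥ A *ᵥ x := by
  set v : EuclideanSpace ℝ (Fin N) := WithLp.toLp 2 x
  have hquad : ∀ c : ℝ, inner ℝ (c • v) (Matrix.toEuclideanLin A (c • v)) =
      c ^ 2 * (x ⬝ᵥ A *ᵥ x) := fun c => by
    rw [map_smul, real_inner_smul_left, real_inner_smul_right,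
      EuclideanSpace.inner_eq_star_dotProduct]
    simp [v, dotProduct_comm, sq, mul_assoc]
  rcases eq_or_ne ‖v‖ 0 with hv | hv
  · have : x = 0 := by simpa [v] using hv
    simp [this]
  have hmin : minEig A ≤ ‖v‖⁻¹ ^ 2 * (x ⬝ᵥ A *ᵥ x) :=
    csInf_le (bddBelow_rayleigh A) ⟨‖v‖⁻¹ • v, by simp [norm_smul, hv], (hquad _).symm⟩
  rw [← norm_toLp_sq]
  calc minEig A * ‖v‖ ^ 2 ≤ ‖v‖⁻¹ ^ 2 * (x ⬝ᵥ A *ᵥ x) * ‖v‖ ^ 2 := by gcongr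
    _ = x ⬝ᵥ A *ᵥ x := by field_simp

lemma sub_mulVec_dotProduct_sub_mulVec_le {N : ℕ} {A : Matrix (Fin N) (Fin N) ℝ} (hA : A.IsSymm)
    (hds : A ∈ doublyStochastic ℝ (Fin N)) (hc : 0 < 1 - minEig A) (x : Fin N → ℝ) :
    (x - A *ᵥ x) ⬝ᵥ (x - A *ᵥ x) ≤ (1 - minEig A) * (x ⬝ᵥ (x - A *ᵥ x)) := by
  have hB : (1 - A).IsSymm := isSymm_one.sub hA
  have h0 : ∀ y, 0 ≤ y ⬝ᵥ (1 - A) *ᵥ y := fun y => by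
    rw [sub_mulVec, one_mulVec, dotProduct_sub]
    linarith [dotProduct_mulVec_le_dotProduct_self_of_mem_doublyStochastic hds y]
  have hle : ∀ y, y ⬝ᵥ (1 - A) *ᵥ y ≤ (1 - minEig A) * (y ⬝ᵥ y) := fun y => by
    rw [sub_mulVec, one_mulVec, dotProduct_sub]
    linarith [minEig_mul_dotProduct_self_le A y]
  simpa only [sub_mulVec, one_mulVec] using
    mulVec_dotProduct_mulVec_le_of_nonneg_of_le (1 - A) hB hc h0 hle x

section Consensus

variable {ι : Type*} [Fintype ι] {n r : ℕ}

def euclidGrad (A : Matrix ι ι ℝ) (Xs : ι → Matrix (Fin n) (Fin r) ℝ) (i : ι) :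
    Matrix (Fin n) (Fin r) ℝ :=
  Xs i - ∑ j, A i j • Xs j

/-- `consensusPotential (W ^ t) Xs` is `4 h_t(𝐗)`. -/
def consensusPotential (A : Matrix ι ι ℝ) (Xs : ι → Matrix (Fin n) (Fin r) ℝ) : ℝ :=
  ∑ i, ∑ j, A i j * frob (Xs i - Xs j) ^ 2

variable {A : Matrix ι ι ℝ} (Xs : ι → Matrix (Fin n) (Fin r) ℝ)

lemma consensusPotential_nonneg (hnonneg : ∀ i j, 0 ≤ A i j) : 0 ≤ consensusPotential A Xs :=
  Finset.sum_nonneg fun i _ => Finset.sum_nonneg fun j _ => mul_nonneg (hnonneg i j) (sq_nonneg _)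

lemma innerF_euclidGrad (hrow : ∀ i, ∑ j, A i j = 1) (U : Matrix (Fin n) (Fin r) ℝ) (i : ι) :
    innerF U (euclidGrad A Xs i) = ∑ j, A i j * innerF U (Xs i - Xs j) := by
  simp only [euclidGrad, innerF_sub_right, innerF_sum_right, innerF_smul_right, mul_sub,
    Finset.sum_sub_distrib, ← Finset.sum_mul, hrow, one_mul]

lemma sum_innerF_sub_euclidGrad (hA : A.IsSymm) (hrow : ∀ i, ∑ j, A i j = 1)
    (Z : Matrix (Fin n) (Fin r) ℝ) :
    ∑ i, innerF (Xs i - Z) (euclidGrad A Xs i) = consensusPotential A Xs / 2 := by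
  set S := ∑ i, ∑ j, A i j * innerF (Xs i - Z) (Xs i - Xs j)
  have hS : ∑ i, innerF (Xs i - Z) (euclidGrad A Xs i) = S :=
    Finset.sum_congr rfl fun i _ => innerF_euclidGrad Xs hrow _ i
  have hswap : S = ∑ i, ∑ j, A i j * innerF (Xs j - Z) (Xs j - Xs i) := by
    rw [Finset.sum_comm]
    simp only [S, hA.apply]
  have hdouble : S + S = consensusPotential A Xs := by
    conv_lhs => arg 2; rw [hswap]
    simp only [S, consensusPotential, ← Finset.sum_add_distrib, ← mul_add,
      innerF_sub_add_innerF_sub]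
  linarith

lemma sum_innerF_mul_gram_euclidGrad_le (hnonneg : ∀ i j, 0 ≤ A i j) (hrow : ∀ i, ∑ j, A i j = 1)
    (hXs : ∀ i, Xs i ∈ Stiefel n r) (Z : Matrix (Fin n) (Fin r) ℝ) {s : ℝ}
    (hs : ∀ i, frob (Xs i - Z) ^ 2 ≤ s) :
    ∑ i, innerF (Xs i * ((Xs i - Z)ᵀ * (Xs i - Z))) (euclidGrad A Xs i) ≤
      s * consensusPotential A Xs / 2 := by
  simp only [innerF_euclidGrad Xs hrow, consensusPotential, Finset.mul_sum, Finset.sum_div]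
  gcongr with i _ j _
  calc A i j * innerF (Xs i * ((Xs i - Z)ᵀ * (Xs i - Z))) (Xs i - Xs j)
      ≤ A i j * (frob (Xs i - Z) ^ 2 * frob (Xs i - Xs j) ^ 2 / 2) :=
        mul_le_mul_of_nonneg_left (innerF_mul_gram_sub_le (hXs i) (hXs j) _) (hnonneg i j)
    _ ≤ A i j * (s * frob (Xs i - Xs j) ^ 2 / 2) := by
        gcongr
        · exact hnonneg i j
        · exact hs i
    _ = s * (A i j * frob (Xs i - Xs j) ^ 2) / 2 := by ring

lemma le_sum_innerF_sub_projT_euclidGrad (hA : A.IsSymm) (hnonneg : ∀ i j, 0 ≤ A i j)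
    (hrow : ∀ i, ∑ j, A i j = 1) (hXs : ∀ i, Xs i ∈ Stiefel n r) {Z : Matrix (Fin n) (Fin r) ℝ}
    (hZ : Z ∈ Stiefel n r) {s : ℝ} (hs : ∀ i, frob (Xs i - Z) ^ 2 ≤ s) :
    (2 - s) * consensusPotential A Xs / 4 ≤
      ∑ i, innerF (Xs i - Z) (projT (Xs i) (euclidGrad A Xs i)) := by
  have hterm : ∀ i, innerF (Xs i - Z) (projT (Xs i) (euclidGrad A Xs i)) =
      innerF (Xs i - Z) (euclidGrad A Xs i) -
        (1 / 2 : ℝ) * innerF (Xs i * ((Xs i - Z)ᵀ * (Xs i - Z))) (euclidGrad A Xs i) := fun i => by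
    rw [innerF_projT_comm, projT_sub_of_mem_stiefel (hXs i) hZ, innerF_sub_left,
      innerF_smul_left]
  rw [Finset.sum_congr rfl fun i _ => hterm i, Finset.sum_sub_distrib, ← Finset.mul_sum,
    sum_innerF_sub_euclidGrad Xs hA hrow]
  linarith [sum_innerF_mul_gram_euclidGrad_le Xs hnonneg hrow hXs Z hs]

end Consensus

lemma sum_frob_sq_euclidGrad_le {N n r : ℕ} {A : Matrix (Fin N) (Fin N) ℝ} (hA : A.IsSymm)
    (hds : A ∈ doublyStochastic ℝ (Fin N)) (hc : 0 < 1 - minEig A)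
    (Xs : Fin N → Matrix (Fin n) (Fin r) ℝ) :
    ∑ i, frob (euclidGrad A Xs i) ^ 2 ≤ (1 - minEig A) * (consensusPotential A Xs / 2) := by
  have hcoord : ∀ a b, (fun i => euclidGrad A Xs i a b) =
      (fun i => Xs i a b) - A *ᵥ (fun i => Xs i a b) := fun a b => by
    ext i
    simp [euclidGrad, mulVec, dotProduct, Matrix.sum_apply]
  have hhalf := sum_innerF_sub_euclidGrad Xs hA (sum_row_of_mem_doublyStochastic hds) 0
  simp only [sub_zero] at hhalf
  rw [← hhalf]
  simp only [frob_sq, sum_innerF_eq_sum_dotProduct, hcoord, Finset.mul_sum]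
  gcongr with a _ b _
  exact sub_mulVec_dotProduct_sub_mulVec_le hA hds hc _

lemma div_mul_le_of_le_mul_half {Φ L q g y : ℝ} (hΦ : 0 ≤ Φ) (hq : 0 ≤ q) (hg : 0 ≤ g)
    (hgL : 0 < L → g ≤ L * (q / 2)) (hy : Φ * q / 4 ≤ y) : Φ / (2 * L) * g ≤ y := by
  rcases le_or_gt L 0 with hL | hL
  · have hcoef : Φ / (2 * L) ≤ 0 := div_nonpos_of_nonneg_of_nonpos hΦ (by linarith)
    nlinarith [mul_nonpos_of_nonpos_of_nonneg hcoef hg, mul_nonneg hΦ hq]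
  · calc Φ / (2 * L) * g ≤ Φ / (2 * L) * (L * (q / 2)) := by gcongr; exact hgL hL
      _ = Φ * q / 4 := by field_simp; ring
      _ ≤ y := hy

lemma gradh_eq_projT_euclidGrad {N n r : ℕ} (W : Matrix (Fin N) (Fin N) ℝ) (t : ℕ)
    (Xs : Fin N → Matrix (Fin n) (Fin r) ℝ) (i : Fin N) :
    gradh W t Xs i = projT (Xs i) (euclidGrad (W ^ t) Xs i) := rfl

theorem consensus_gradient_secant_inequality_general {n r N : ℕ}
    (W : Matrix (Fin N) (Fin N) ℝ)
    (hsymm : W.IsSymm) (hnonneg : ∀ i j, 0 ≤ W i j)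
    (hrow : ∀ i, ∑ j, W i j = 1) (hcol : ∀ j, ∑ i, W i j = 1)
    (t : ℕ) (Lt : ℝ) (hLt : Lt = 1 - minEig (W ^ t))
    (δ₁ δ₂ : ℝ) (hδ₂ : δ₂ ≤ 1 / 6)
    (Xs : Fin N → Matrix (Fin n) (Fin r) ℝ)
    (Xhat : Matrix (Fin n) (Fin r) ℝ) (hXhat : IsIAM Xs Xhat)
    (hS : inS δ₁ δ₂ Xs Xhat)
    (Φ : ℝ) (hΦ : Φ = 2 - sSup {c | ∃ i, c = frob (Xs i - Xhat) ^ 2}) :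
    ∑ i, innerF (Xs i - Xhat) (gradh W t Xs i) ≥
      Φ / (2 * Lt) * ∑ i, frob (gradh W t Xs i) ^ 2 := by
  subst hLt
  simp only [gradh_eq_projT_euclidGrad]
  have hA : W ^ t ∈ doublyStochastic ℝ (Fin N) :=
    pow_mem (mem_doublyStochastic_iff_sum.2 ⟨hnonneg, hrow, hcol⟩) t
  have hA_nonneg : ∀ i j, 0 ≤ (W ^ t) i j := fun i j => nonneg_of_mem_doublyStochastic hA
  obtain ⟨hXs, -, hδ⟩ := hS
  have hΦ_iSup : Φ = 2 - ⨆ i, frob (Xs i - Xhat) ^ 2 := by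
    rw [hΦ, ← sSup_range]
    congr 2
    ext c
    simp [eq_comm]
  have hdev : ∀ i, frob (Xs i - Xhat) ^ 2 ≤ (1 / 6) ^ 2 :=
    fun i => pow_le_pow_left₀ (frob_nonneg _) ((hδ i).trans hδ₂) 2
  have hlower := le_sum_innerF_sub_projT_euclidGrad Xs (hsymm.pow t) hA_nonneg
    (sum_row_of_mem_doublyStochastic hA) hXs hXhat.1 (le_ciSup (Set.finite_range _).bddAbove)
  rw [← hΦ_iSup] at hlower
  have hΦ_nonneg : 0 ≤ Φ := by linarith [Real.iSup_le hdev (by norm_num)]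
  refine div_mul_le_of_le_mul_half hΦ_nonneg (consensusPotential_nonneg Xs hA_nonneg)
    (by positivity) (fun hL => ?_) hlower
  exact (Finset.sum_le_sum fun i _ => frob_projT_sq_le (hXs i) _).trans
    (sum_frob_sq_euclidGrad_le (hsymm.pow t) hA hL Xs)

/-- restricted secant-type inequality for the consensus potential in the local
region `𝒮`: with `Φ = 2 − max_i ‖X_i − X̂‖_F² ≥ 1`,
`Σ_i ⟨X_i − X̂, grad h_{i,t}(𝐗)⟩ ≥ (Φ/(2L_t)) Σ_i ‖grad h_{i,t}(𝐗)‖_F²`. -/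
theorem consensus_gradient_secant_inequality {n r N : ℕ}
    (W : Matrix (Fin N) (Fin N) ℝ)
    (hsymm : W.IsSymm) (hnonneg : ∀ i j, 0 ≤ W i j)
    (hrow : ∀ i, ∑ j, W i j = 1) (hcol : ∀ j, ∑ i, W i j = 1)
    (hconn : (commGraph W).Connected)
    (t : ℕ) (ht : 1 ≤ t) (Lt : ℝ) (hLt : Lt = 1 - minEig (W ^ t))
    (δ₁ δ₂ : ℝ) (hδ₂ : δ₂ ≤ 1 / 6) (hδ₁ : δ₁ ≤ δ₂ / (5 * Real.sqrt r))
    (Xs : Fin N → Matrix (Fin n) (Fin r) ℝ)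
    (Xhat : Matrix (Fin n) (Fin r) ℝ) (hXhat : IsIAM Xs Xhat)
    (hS : inS δ₁ δ₂ Xs Xhat)
    (Φ : ℝ) (hΦ : Φ = 2 - sSup {c | ∃ i, c = frob (Xs i - Xhat) ^ 2}) :
    ∑ i, innerF (Xs i - Xhat) (gradh W t Xs i) ≥
      Φ / (2 * Lt) * ∑ i, frob (gradh W t Xs i) ^ 2 :=
  consensus_gradient_secant_inequality_general W hsymm hnonneg hrow hcol t Lt hLt δ₁ δ₂ hδ₂ Xs Xhat
    hXhat hS Φ hΦ
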